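/- Let I be a family of pairwise disjoint intervals in the full binary tree and call an interval I ∈ 𝕀 a record breaker if it is strictly longer than all intervals of 𝕀 whose sources are ancestors of the source of I. Then almost surely, a random branch visits targets of record breakers only finitely often. (Key estimate: the probability of the set A_n of branches that see the target of some record breaker after already having seen at least n sources of record breakers is at most 2^(-n), since the n-th record breaker on any branch has length at least n.) -/

import Mathlib

open MeasureTheory ENNReal

/-- The cylinder of branches extending the finite word `x`. -/
def cylinder (x : List Bool) : Set (ℕ → Bool) :=
  {π | ∀ i : Fin x.length, π i = x.get i}

/-- A branch visits the set of nodes `S` infinitely often. -/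
def visitsIO (S : Set (List Bool)) (π : ℕ → Bool) : Prop :=
  {z ∈ S | π ∈ cylinder z}.Infinite

/-- The set of nodes of the interval `[p.1, p.2]`. -/
def intervalSet (p : List Bool × List Bool) : Set (List Bool) :=
  {z | p.1 <+: z ∧ z <+: p.2}

/-- The length of an interval: the number of nodes strictly between source and target. -/
def intervalLen (p : List Bool × List Bool) : ℕ :=
  p.2.length - p.1.length - 1

/-- A family of pairwise disjoint intervals in the full binary tree. -/
def IsIntervalFamily (I : Set (List Bool × List Bool)) : Prop :=
  (∀ p ∈ I, p.1 <+: p.2 ∧ p.1 ≠ p.2) ∧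
  (∀ p ∈ I, ∀ q ∈ I, p ≠ q → intervalSet p ∩ intervalSet q = ∅)

/-- An interval of the family is a record breaker if it is strictly longer than all
intervals of the family whose sources are strict ancestors of its source. -/
def RecordBreaker (I : Set (List Bool × List Bool)) (p : List Bool × List Bool) : Prop :=
  p ∈ I ∧ ∀ q ∈ I, (q.1 <+: p.1 ∧ q.1 ≠ p.1) → intervalLen q < intervalLen p

/-!
Along a branch `π`, record breakers whose sources lie on `π` have pairwise distinct lengths:
their sources are comparable, distinct sources carry distinct intervals, and the one with the
lower source is strictly shorter. Since reaching the target of an interval of length `n` from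
its source has probability `2⁻¹ ^ (n + 1)`, summing over record breakers gives
`∑ μ (cylinder target) = ∫ ∑_{sources on π} 2⁻¹ ^ (len + 1) ≤ ∑ₙ 2⁻¹ ^ (n + 1) = 1`,
and the first Borel–Cantelli lemma concludes.
-/

theorem mem_cylinder_iff {x : List Bool} {π : ℕ → Bool} :
    π ∈ cylinder x ↔ ∀ (i : ℕ) (hi : i < x.length), x[i] = π i :=
  ⟨fun h i hi => (h ⟨i, hi⟩).symm, fun h i => (h i i.2).symm⟩

theorem measurableSet_cylinder (x : List Bool) : MeasurableSet (cylinder x) := by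
  have : cylinder x = ⋂ i : Fin x.length, (fun π : ℕ → Bool => π i) ⁻¹' {x.get i} := by
    ext π; simp [_root_.cylinder]
  rw [this]
  exact .iInter fun i => measurable_pi_apply _ (.singleton _)

theorem prefix_of_mem_cylinder {x y : List Bool} {π : ℕ → Bool} (hx : π ∈ cylinder x)
    (hy : π ∈ cylinder y) (hxy : x.length ≤ y.length) : x <+: y := by
  rw [mem_cylinder_iff] at hx hy
  exact List.prefix_iff_getElem.2 ⟨hxy, fun i hi => by rw [hx, hy]⟩

theorem prefix_or_prefix_of_mem_cylinder {x y : List Bool} {π : ℕ → Bool}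
    (hx : π ∈ cylinder x) (hy : π ∈ cylinder y) : x <+: y ∨ y <+: x :=
  (le_total x.length y.length).imp (prefix_of_mem_cylinder hx hy) (prefix_of_mem_cylinder hy hx)

theorem measure_cylinder_eq_inv_two_pow_mul {μ : Measure (ℕ → Bool)}
    (hμ : ∀ x : List Bool, μ (cylinder x) = (2 : ℝ≥0∞)⁻¹ ^ x.length) {x y : List Bool} :
    μ (cylinder (x ++ y)) = 2⁻¹ ^ y.length * μ (cylinder x) := by
  rw [hμ, hμ, List.length_append, pow_add, mul_comm]

namespace IsIntervalFamily

variable {I : Set (List Bool × List Bool)} (hI : IsIntervalFamily I)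
include hI

theorem eq_of_fst_eq {p q : List Bool × List Bool} (hp : p ∈ I) (hq : q ∈ I) (h : p.1 = q.1) :
    p = q := by
  by_contra hne
  have hsrc : p.1 ∈ intervalSet p ∩ intervalSet q :=
    ⟨⟨List.prefix_rfl, (hI.1 p hp).1⟩, ⟨h ▸ List.prefix_rfl, h ▸ (hI.1 q hq).1⟩⟩
  simp [hI.2 p hp q hq hne] at hsrc

theorem exists_snd_eq_append {p : List Bool × List Bool} (hp : p ∈ I) :
    ∃ w : List Bool, w.length = intervalLen p + 1 ∧ p.2 = p.1 ++ w := by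
  obtain ⟨⟨w, hw⟩, hne⟩ := hI.1 p hp
  have hw_ne : w ≠ [] := by rintro rfl; simp at hw; exact hne hw
  refine ⟨w, ?_, hw.symm⟩
  have := List.length_pos_iff.2 hw_ne
  simp only [intervalLen, ← hw, List.length_append]
  omega

theorem intervalLen_injOn_recordBreaker (π : ℕ → Bool) :
    Set.InjOn intervalLen {p | RecordBreaker I p ∧ π ∈ cylinder p.1} := by
  suffices h : ∀ p q, RecordBreaker I p → RecordBreaker I q → q.1 <+: p.1 →
      intervalLen p = intervalLen q → p = q by
    rintro p ⟨hp, hπp⟩ q ⟨hq, hπq⟩ hlen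
    rcases prefix_or_prefix_of_mem_cylinder hπq hπp with hqp | hpq
    · exact h p q hp hq hqp hlen
    · exact (h q p hq hp hpq hlen.symm).symm
  intro p q hp hq hqp hlen
  by_contra hne
  have hsrc : q.1 ≠ p.1 := fun h => hne (hI.eq_of_fst_eq hp.1 hq.1 h.symm)
  exact (hp.2 q hq.1 ⟨hqp, hsrc⟩).ne hlen.symm

end IsIntervalFamily

section RecordBreakers

variable {μ : Measure (ℕ → Bool)} {I : Set (List Bool × List Bool)}

theorem measure_cylinder_snd (hμ : ∀ x : List Bool, μ (cylinder x) = (2 : ℝ≥0∞)⁻¹ ^ x.length)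
    (hI : IsIntervalFamily I) {p : List Bool × List Bool} (hp : p ∈ I) :
    μ (cylinder p.2) = 2⁻¹ ^ (intervalLen p + 1) * μ (cylinder p.1) := by
  obtain ⟨w, hw, hpw⟩ := hI.exists_snd_eq_append hp
  rw [hpw, measure_cylinder_eq_inv_two_pow_mul hμ, hw]

theorem tsum_indicator_recordBreaker_le_one (hI : IsIntervalFamily I) (π : ℕ → Bool) :
    ∑' p : {p // RecordBreaker I p},
      (cylinder p.1.1).indicator (fun _ => (2 : ℝ≥0∞)⁻¹ ^ (intervalLen p.1 + 1)) π ≤ 1 := by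
  set f : {p // RecordBreaker I p} → ℝ≥0∞ :=
    fun p => (cylinder p.1.1).indicator (fun _ => (2 : ℝ≥0∞)⁻¹ ^ (intervalLen p.1 + 1)) π
  have hsupp : ∀ p ∈ Function.support f, π ∈ cylinder p.1.1 :=
    fun _ hp => Set.mem_of_indicator_ne_zero hp
  have hinj : Function.Injective fun p : Function.support f => intervalLen p.1.1 :=
    fun p q h => Subtype.ext <| Subtype.ext <|
      hI.intervalLen_injOn_recordBreaker π ⟨p.1.2, hsupp _ p.2⟩ ⟨q.1.2, hsupp _ q.2⟩ h
  calc ∑' p, f p = ∑' p : Function.support f, (2 : ℝ≥0∞)⁻¹ ^ (intervalLen p.1.1 + 1) := by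
        rw [← tsum_subtype_support f]
        exact tsum_congr fun p => Set.indicator_of_mem (hsupp _ p.2) _
    _ ≤ ∑' n : ℕ, (2 : ℝ≥0∞)⁻¹ ^ (n + 1) :=
        ENNReal.tsum_comp_le_tsum_of_injective hinj fun n => 2⁻¹ ^ (n + 1)
    _ = 1 := by
        rw [ENNReal.tsum_geometric_add_one, one_sub_inv_two, inv_inv,
          ENNReal.inv_mul_cancel two_ne_zero ofNat_ne_top]

theorem tsum_measure_cylinder_snd_recordBreaker_le_one [IsProbabilityMeasure μ]
    (hμ : ∀ x : List Bool, μ (cylinder x) = (2 : ℝ≥0∞)⁻¹ ^ x.length) (hI : IsIntervalFamily I) :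
    ∑' p : {p // RecordBreaker I p}, μ (cylinder p.1.2) ≤ 1 :=
  calc ∑' p : {p // RecordBreaker I p}, μ (cylinder p.1.2)
      = ∑' p : {p // RecordBreaker I p}, ∫⁻ π,
          (cylinder p.1.1).indicator (fun _ => (2 : ℝ≥0∞)⁻¹ ^ (intervalLen p.1 + 1)) π ∂μ := by
        refine tsum_congr fun p => ?_
        rw [lintegral_indicator_const (measurableSet_cylinder _), measure_cylinder_snd hμ hI p.2.1,
          mul_comm]
    _ = ∫⁻ π, ∑' p : {p // RecordBreaker I p},
          (cylinder p.1.1).indicator (fun _ => (2 : ℝ≥0∞)⁻¹ ^ (intervalLen p.1 + 1)) π ∂μ :=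
        (lintegral_tsum fun p =>
          (measurable_const.indicator (measurableSet_cylinder _)).aemeasurable).symm
    _ ≤ ∫⁻ _, 1 ∂μ := lintegral_mono (tsum_indicator_recordBreaker_le_one hI)
    _ = 1 := by simp

end RecordBreakers

/-- Almost surely, a branch visits targets of record breakers only finitely often. -/
theorem record_breaker_targets_finitely_often (μ : Measure (ℕ → Bool))
    [IsProbabilityMeasure μ]
    (hμ : ∀ x : List Bool, μ (cylinder x) = (2 : ℝ≥0∞)⁻¹ ^ x.length)
    (I : Set (List Bool × List Bool)) (hI : IsIntervalFamily I) :
    μ {π | {z ∈ Prod.snd '' {p | RecordBreaker I p} | π ∈ cylinder z}.Finite} = 1 := by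
  have hae : ∀ᵐ π ∂μ, {p : {p // RecordBreaker I p} | π ∈ cylinder p.1.2}.Finite :=
    ae_finite_setOfPred_mem
      (ne_top_of_le_ne_top one_ne_top (tsum_measure_cylinder_snd_recordBreaker_le_one hμ hI))
  have hfin : ∀ᵐ π ∂μ, {z ∈ Prod.snd '' {p | RecordBreaker I p} | π ∈ cylinder z}.Finite := by
    filter_upwards [hae] with π hπ
    refine (hπ.image fun p => p.1.2).subset ?_
    rintro z ⟨⟨p, hp, rfl⟩, hz⟩
    exact ⟨⟨p, hp⟩, hz, rfl⟩
  rw [measure_congr (Filter.eventuallyEq_univ.2 hfin), measure_univ]
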